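/- arXiv:1403.0957 — 11 statements merged into one kernel-verified Lean document; each statement's English description precedes it below -/
import Mathlib

section
/- Let K ≥ 2 be an integer and let S, I, C be real numbers with I > 1, I² ≤ S and C ≥ 0. Set c := min(2^(2C), I − 1), μ1 := c/(2I), μ2 := 1/I − c/(2S), μ3 := c/(2S). Then log₂( S·μ1 / ( S·(μ2+μ3) + I·(μ1+μ2+μ3)·(K−1) + (μ1+μ2+μ3) ) ) ≥ log₂ c − log₂(4(K+1)). -/
open Real

theorem gauss_very_weak_R1 (K : ℕ) (hK : 2 ≤ K) (S I C : ℝ)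
    (hI : 1 < I) (hSI : I ^ 2 ≤ S) (hC : 0 ≤ C)
    (c μ1 μ2 μ3 : ℝ)
    (hc : c = min ((2 : ℝ) ^ (2 * C)) (I - 1))
    (hμ1 : μ1 = c / (2 * I))
    (hμ2 : μ2 = 1 / I - c / (2 * S))
    (hμ3 : μ3 = c / (2 * S)) :
    logb 2 (S * μ1 /
        (S * (μ2 + μ3) + I * (μ1 + μ2 + μ3) * ((K : ℝ) - 1) + (μ1 + μ2 + μ3)))
      ≥ logb 2 c - logb 2 (4 * ((K : ℝ) + 1)) := by
  have hI0 : (0:ℝ) < I := by linarith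
  have hS0 : (0:ℝ) < S := by nlinarith
  have hc0 : 0 < c := by
    rw [hc]
    exact lt_min (rpow_pos_of_pos two_pos _) (by linarith)
  have hcI : c ≤ I - 1 := hc ▸ min_le_right _ _
  have hKr : (2:ℝ) ≤ (K:ℝ) := by exact_mod_cast hK
  subst hμ1 hμ2 hμ3
  have hsum23 : 1 / I - c / (2 * S) + c / (2 * S) = 1 / I := by ring
  have hsum : c / (2 * I) + (1 / I - c / (2 * S)) + c / (2 * S) = (c + 2) / (2 * I) := by
    field_simp; ring
  rw [hsum23] at *
  rw [hsum]
  have hD : (0:ℝ) < S * (1 / I) + I * ((c + 2) / (2 * I)) * ((K : ℝ) - 1) + (c + 2) / (2 * I) := by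
    have h1 : 0 < S * (1 / I) := by positivity
    have h2 : (0:ℝ) ≤ I * ((c + 2) / (2 * I)) * ((K : ℝ) - 1) := by
      apply mul_nonneg (by positivity); linarith
    have h3 : (0:ℝ) < (c + 2) / (2 * I) := by positivity
    linarith
  have key : c / (4 * ((K:ℝ) + 1)) ≤ S * (c / (2 * I)) /
      (S * (1 / I) + I * ((c + 2) / (2 * I)) * ((K : ℝ) - 1) + (c + 2) / (2 * I)) := by
    rw [div_le_div_iff₀ (by positivity) hD]
    have hII : I ≤ S / I := by
      rw [le_div_iff₀ hI0]; nlinarith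
    have e1 : (c + 2) * ((K:ℝ) - 1) / 2 ≤ S / I * ((K:ℝ) - 1) := by
      have h2 : (c + 2) / 2 ≤ S / I := by linarith
      nlinarith [mul_le_mul_of_nonneg_right h2 (by linarith : (0:ℝ) ≤ (K:ℝ) - 1)]
    have e2 : (c + 2) / (2 * I) ≤ S / I := by
      rw [div_le_div_iff₀ (by positivity) hI0]
      nlinarith
    have hDle : S * (1 / I) + I * ((c + 2) / (2 * I)) * ((K : ℝ) - 1) + (c + 2) / (2 * I)
        ≤ S / I * ((K:ℝ) + 1) := by
      have : I * ((c + 2) / (2 * I)) * ((K : ℝ) - 1) = (c + 2) * ((K:ℝ) - 1) / 2 := by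
        field_simp
      rw [this]
      have : S * (1 / I) = S / I := by ring
      rw [this]
      nlinarith [e1, e2]
    calc c * (S * (1 / I) + I * ((c + 2) / (2 * I)) * ((K : ℝ) - 1) + (c + 2) / (2 * I))
        ≤ c * (S / I * ((K:ℝ) + 1)) := by
          exact mul_le_mul_of_nonneg_left hDle (le_of_lt hc0)
      _ ≤ S * (c / (2 * I)) * (4 * ((K:ℝ) + 1)) := by
          have h : S * (c / (2 * I)) * (4 * ((K:ℝ) + 1)) = 2 * (c * (S / I * ((K:ℝ)+1))) := by
            field_simp; ring
          rw [h]
          have hp : 0 < c * (S / I * ((K:ℝ)+1)) := by positivity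
          linarith
  rw [ge_iff_le, ← Real.logb_div (ne_of_gt hc0) (by positivity)]
  exact Real.logb_le_logb_of_le (by norm_num) (by positivity) key
end

section
/- Let K ≥ 2 be an integer and let S, I, C be real numbers with I ≥ 2, I² ≤ S and C ≥ 0. Set c := min(2^(2C), I − 1), μ1 := c/(2I), μ2 := 1/I − c/(2S), μ3 := c/(2S). Then log₂( S·μ2 / ( S·μ3 + I·(μ1+μ2+μ3)·(K−1) + (μ1+μ2+μ3) ) ) ≥ log₂(1 + S/I) − log₂ c − log₂(3K). -/
open Real

theorem gauss_very_weak_R2 (K : ℕ) (hK : 2 ≤ K) (S I C : ℝ)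
    (hI : 2 ≤ I) (hSI : I ^ 2 ≤ S) (hC : 0 ≤ C)
    (c μ1 μ2 μ3 : ℝ)
    (hc : c = min ((2 : ℝ) ^ (2 * C)) (I - 1))
    (hμ1 : μ1 = c / (2 * I))
    (hμ2 : μ2 = 1 / I - c / (2 * S))
    (hμ3 : μ3 = c / (2 * S)) :
    logb 2 (S * μ2 /
        (S * μ3 + I * (μ1 + μ2 + μ3) * ((K : ℝ) - 1) + (μ1 + μ2 + μ3)))
      ≥ logb 2 (1 + S / I) - logb 2 c - logb 2 (3 * (K : ℝ)) := by
  have hI0 : (0:ℝ) < I := by linarith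
  have hS4 : (4:ℝ) ≤ S := by nlinarith
  have hS0 : (0:ℝ) < S := by linarith
  have hK2 : (2:ℝ) ≤ (K:ℝ) := by exact_mod_cast hK
  have hc1 : (1:ℝ) ≤ c := by
    rw [hc]
    refine le_min ?_ (by linarith)
    have h := Real.rpow_le_rpow_of_exponent_le (by norm_num : (1:ℝ) ≤ 2)
      (by linarith : (0:ℝ) ≤ 2 * C)
    simpa using h
  have hcI : c ≤ I - 1 := hc ▸ min_le_right _ _
  -- algebraic simplifications
  have hA : S * μ2 = S / I - c / 2 := by
    rw [hμ2]; field_simp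
  have hsum : μ1 + μ2 + μ3 = (c + 2) / (2 * I) := by
    rw [hμ1, hμ2, hμ3]; field_simp; ring
  have hSμ3 : S * μ3 = c / 2 := by
    rw [hμ3]; field_simp
  set x := S / I with hx
  have hxI : I ≤ x := (le_div_iff₀ hI0).2 (by nlinarith)
  have hxc : c + 1 ≤ x := by linarith
  have hA0 : 0 < S * μ2 := by rw [hA]; linarith
  have hD : S * μ3 + I * (μ1 + μ2 + μ3) * ((K : ℝ) - 1) + (μ1 + μ2 + μ3)
      = c / 2 + (c + 2) * ((K:ℝ) - 1) / 2 + (c + 2) / (2 * I) := by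
    rw [hSμ3, hsum]; field_simp
  have hdiv : (c + 2) / (2 * I) ≤ 3 * c / 4 := by
    apply div_le_div₀ (by linarith) (by linarith) (by norm_num) (by linarith)
  have hD0 : 0 < S * μ3 + I * (μ1 + μ2 + μ3) * ((K : ℝ) - 1) + (μ1 + μ2 + μ3) := by
    rw [hD]
    have : 0 < (c + 2) / (2 * I) := by positivity
    nlinarith
  have hx1 : (0:ℝ) < 1 + x := by linarith
  have h3K : (0:ℝ) < 3 * (K:ℝ) := by linarith
  have hc0 : (0:ℝ) < c := by linarith
  -- key inequality
  have hkey : (1 + x) * (S * μ3 + I * (μ1 + μ2 + μ3) * ((K : ℝ) - 1) + (μ1 + μ2 + μ3))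
      ≤ S * μ2 * (c * (3 * (K:ℝ))) := by
    rw [hD, hA]
    have h1 : c / 2 + (c + 2) * ((K:ℝ) - 1) / 2 + (c + 2) / (2 * I)
        ≤ 3 * (K:ℝ) * c / 2 := by
      nlinarith [hdiv, mul_nonneg (by linarith : (0:ℝ) ≤ c - 1)
        (by linarith : (0:ℝ) ≤ (K:ℝ) - 1)]
    have h2 : (1 + x) / 2 ≤ x - c / 2 := by linarith
    calc (1 + x) * (c / 2 + (c + 2) * ((K:ℝ) - 1) / 2 + (c + 2) / (2 * I))
        ≤ (1 + x) * (3 * (K:ℝ) * c / 2) := by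
          exact mul_le_mul_of_nonneg_left h1 (le_of_lt hx1)
      _ = (1 + x) / 2 * (3 * (K:ℝ) * c) := by ring
      _ ≤ (x - c / 2) * (3 * (K:ℝ) * c) := by
          exact mul_le_mul_of_nonneg_right h2 (by positivity)
      _ = (x - c / 2) * (c * (3 * (K:ℝ))) := by ring
  have hRHS : logb 2 (1 + x) - logb 2 c - logb 2 (3 * (K:ℝ))
      = logb 2 ((1 + x) / (c * (3 * (K:ℝ)))) := by
    rw [← div_div, Real.logb_div (by positivity) (by positivity),
      Real.logb_div (by positivity) (by positivity)]
  rw [hRHS]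
  apply Real.logb_le_logb_of_le (by norm_num) (by positivity)
  rw [div_le_div_iff₀ (by positivity) hD0]
  exact hkey
end

section
/- Let K ≥ 2 be an integer and let S, I, C be real numbers with I > 1, I² ≤ S and C ≥ 0. Set c := min(2^(2C), I − 1), μ1 := c/(2I), μ4 := 1/I. Then log₂( ( √S·(1/(K−1)) + √I·((K−2)/(K−1)) )² · μ1 / ( S·μ4 + I·μ4·(K−1) + μ1 + μ4 ) ) ≥ log₂ c − log₂(2(K+1)) − 2·log₂(K−1). -/
open Real

set_option maxHeartbeats 1000000 in
theorem gauss_very_weak_R1_round2 (K : ℕ) (hK : 2 ≤ K) (S I C : ℝ)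
    (hI : 1 < I) (hSI : I ^ 2 ≤ S) (hC : 0 ≤ C)
    (c μ1 μ4 : ℝ)
    (hc : c = min ((2 : ℝ) ^ (2 * C)) (I - 1))
    (hμ1 : μ1 = c / (2 * I))
    (hμ4 : μ4 = 1 / I) :
    logb 2 ((Real.sqrt S * (1 / ((K : ℝ) - 1)) +
          Real.sqrt I * (((K : ℝ) - 2) / ((K : ℝ) - 1))) ^ 2 * μ1 /
        (S * μ4 + I * μ4 * ((K : ℝ) - 1) + μ1 + μ4))
      ≥ logb 2 c - logb 2 (2 * ((K : ℝ) + 1)) - 2 * logb 2 ((K : ℝ) - 1) := by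
  set k : ℝ := (K : ℝ) with hkdef
  have hk : (2 : ℝ) ≤ k := by rw [hkdef]; exact_mod_cast hK
  have hI0 : (0 : ℝ) < I := by linarith
  have hS1 : (1 : ℝ) < S := by nlinarith
  have hc0 : 0 < c := by
    rw [hc]
    exact lt_min (Real.rpow_pos_of_pos two_pos _) (by linarith)
  have hcI : c ≤ I - 1 := by rw [hc]; exact min_le_right _ _
  have hk1 : (1 : ℝ) ≤ k - 1 := by linarith
  have hk10 : (0 : ℝ) < k - 1 := by linarith
  -- denominator
  have hDpos : 0 < S * μ4 + I * μ4 * (k - 1) + μ1 + μ4 := by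
    rw [hμ1, hμ4]
    have h1 : 0 < S * (1 / I) := by positivity
    have h2 : 0 < I * (1 / I) * (k - 1) := by positivity
    have h3 : 0 < c / (2 * I) := by positivity
    have h4 : 0 < 1 / I := by positivity
    linarith
  have hsqS : Real.sqrt S * (1 / (k - 1)) > 0 := by
    have : 0 < Real.sqrt S := Real.sqrt_pos.mpr (by linarith)
    positivity
  have hsqI : 0 ≤ Real.sqrt I * ((k - 2) / (k - 1)) := by
    have : 0 ≤ Real.sqrt I := Real.sqrt_nonneg I
    have h2 : 0 ≤ (k - 2) / (k - 1) := div_nonneg (by linarith) (by linarith)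
    positivity
  -- lower bound on the square term
  have hA : S / (k - 1) ^ 2 ≤
      (Real.sqrt S * (1 / (k - 1)) + Real.sqrt I * ((k - 2) / (k - 1))) ^ 2 := by
    have h1 : (Real.sqrt S * (1 / (k - 1))) ^ 2 ≤
        (Real.sqrt S * (1 / (k - 1)) + Real.sqrt I * ((k - 2) / (k - 1))) ^ 2 := by
      nlinarith [hsqS, hsqI]
    have h2 : (Real.sqrt S * (1 / (k - 1))) ^ 2 = S / (k - 1) ^ 2 := by
      rw [mul_pow, Real.sq_sqrt (by linarith : (0:ℝ) ≤ S)]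
      field_simp
    linarith [h2 ▸ h1]
  -- key scalar inequality
  have hkey : I * (k - 1) + c / 2 + 1 ≤ k * S := by
    nlinarith [mul_nonneg (sub_nonneg.2 hSI) (by linarith : (0:ℝ) ≤ k),
      mul_nonneg (by nlinarith : (0:ℝ) ≤ I ^ 2 - I) (by linarith : (0:ℝ) ≤ k)]
  -- the main inequality between arguments
  have hY : 0 < c / (2 * (k + 1)) / (k - 1) ^ 2 := by positivity
  have hmain : c / (2 * (k + 1)) / (k - 1) ^ 2 ≤
      (Real.sqrt S * (1 / (k - 1)) + Real.sqrt I * ((k - 2) / (k - 1))) ^ 2 * μ1 /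
        (S * μ4 + I * μ4 * (k - 1) + μ1 + μ4) := by
    have hstep : c / (2 * (k + 1)) / (k - 1) ^ 2 ≤
        S / (k - 1) ^ 2 * μ1 / (S * μ4 + I * μ4 * (k - 1) + μ1 + μ4) := by
      rw [hμ1, hμ4]
      have hIne : (I : ℝ) ≠ 0 := ne_of_gt hI0
      have hE : S * (1 / I) + I * (1 / I) * (k - 1) + c / (2 * I) + 1 / I
          = (2 * S + 2 * I * (k - 1) + c + 2) / (2 * I) := by field_simp
      have hE0 : 0 < 2 * S + 2 * I * (k - 1) + c + 2 := by nlinarith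
      rw [hE, div_le_div_iff₀ (by positivity) (div_pos hE0 (by positivity))]
      have hmul := mul_le_mul_of_nonneg_left hkey hc0.le
      have hR : S / (k - 1) ^ 2 * (c / (2 * I)) * (k - 1) ^ 2 = S * (c / (2 * I)) := by
        field_simp
      rw [hR]
      have hdiff : S * (c / (2 * I))
            - c / (2 * (k + 1)) * ((2 * S + 2 * I * (k - 1) + c + 2) / (2 * I))
          = c * (k * S - (I * (k - 1) + c / 2 + 1)) / (2 * I * (k + 1)) := by
        field_simp; ring
      have hnn : 0 ≤ c * (k * S - (I * (k - 1) + c / 2 + 1)) / (2 * I * (k + 1)) :=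
        div_nonneg (mul_nonneg hc0.le (by linarith)) (by positivity)
      linarith [hdiff, hnn]
    refine hstep.trans ?_
    gcongr
    · rw [hμ1]; positivity
  -- rewrite RHS as a single logb
  have hkm1 : (k - 1 : ℝ) ≠ 0 := ne_of_gt hk10
  have h2k1 : (2 * (k + 1) : ℝ) ≠ 0 := by positivity
  have hrw : logb 2 c - logb 2 (2 * (k + 1)) - 2 * logb 2 (k - 1)
      = logb 2 (c / (2 * (k + 1)) / (k - 1) ^ 2) := by
    rw [Real.logb_div (by positivity) (by positivity),
      Real.logb_div (ne_of_gt hc0) h2k1, Real.logb_pow]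
    push_cast
    ring
  rw [ge_iff_le, hrw]
  exact Real.logb_le_logb_of_le one_lt_two hY hmain
end

section
/- Let K ≥ 2 be an integer and let S, I, C be real numbers with I > 1, I² ≤ S and 0 ≤ C ≤ (1/2)·log₂(I − 1). Then min{ log₂(1+S), log₂(1 + I + S/(1+I)) } + C − [ (1/2)·log₂(1 + S/I) + min{ C, (1/2)·log₂(I−1) } + (1/2)·log₂(S/I) − (1/2)·log₂(K+1) − log₂(K−1) − (3/2)·log₂ K − (1/2)·log₂ 12 ] ≤ (1/2)·log₂(K+1) + log₂(K−1) + (3/2)·log₂ K + (1/2)·log₂ 54. -/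
open Real

theorem gauss_very_weak_gap_small_feedback (K : ℕ) (hK : 2 ≤ K) (S I C : ℝ)
    (hI : 1 < I) (hSI : I ^ 2 ≤ S) (hC0 : 0 ≤ C)
    (hC1 : C ≤ (1 / 2) * logb 2 (I - 1)) :
    min (logb 2 (1 + S)) (logb 2 (1 + I + S / (1 + I))) + C -
      ((1 / 2) * logb 2 (1 + S / I) + min C ((1 / 2) * logb 2 (I - 1)) +
        (1 / 2) * logb 2 (S / I) - (1 / 2) * logb 2 ((K : ℝ) + 1) -
        logb 2 ((K : ℝ) - 1) - (3 / 2) * logb 2 (K : ℝ) - (1 / 2) * logb 2 12)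
    ≤ (1 / 2) * logb 2 ((K : ℝ) + 1) + logb 2 ((K : ℝ) - 1) +
        (3 / 2) * logb 2 (K : ℝ) + (1 / 2) * logb 2 54 := by
  rw [min_eq_left hC1]
  have hI0 : (0:ℝ) < I := by linarith
  have hS0 : (0:ℝ) < S := by nlinarith
  have hx1 : 1 < S / I := by
    rw [lt_div_iff₀ hI0]; nlinarith
  set x := S / I with hxdef
  have hA0 : (0:ℝ) < 1 + I + S / (1 + I) := by positivity
  have hA : 1 + I + S / (1 + I) ≤ 1 + 2 * x := by
    have h1 : S / (1 + I) ≤ x := by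
      apply div_le_div_of_nonneg_left hS0.le hI0
      linarith
    have h2 : I ≤ x := by rw [le_div_iff₀ hI0]; nlinarith
    linarith
  have hkey : (1 + I + S / (1 + I)) ^ 2 ≤ (9 / 2) * ((1 + x) * x) := by
    nlinarith [sq_nonneg (x - 1), hA, hx1, hA0]
  -- log bound
  have hb : logb 2 (1 + I + S / (1 + I)) ≤
      (1 / 2) * (logb 2 (9 / 2) + (logb 2 (1 + x) + logb 2 x)) := by
    have h1 : logb 2 ((1 + I + S / (1 + I)) ^ 2) ≤
        logb 2 ((9 / 2) * ((1 + x) * x)) :=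
      Real.logb_le_logb_of_le one_lt_two (by positivity) hkey
    rw [Real.logb_pow] at h1
    have h2 : logb 2 ((9 / 2) * ((1 + x) * x)) =
        logb 2 (9 / 2) + (logb 2 (1 + x) + logb 2 x) := by
      rw [Real.logb_mul (by norm_num) (by positivity),
        Real.logb_mul (by positivity) (by positivity)]
    rw [h2] at h1
    push_cast at h1
    linarith
  have h92 : logb 2 (9 / 2) = logb 2 54 - logb 2 12 := by
    rw [← Real.logb_div (by norm_num) (by norm_num)]
    norm_num
  have hmin : min (logb 2 (1 + S)) (logb 2 (1 + I + S / (1 + I))) ≤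
      logb 2 (1 + I + S / (1 + I)) := min_le_right _ _
  rw [h92] at hb
  linarith
end

section
/- Let K ≥ 2 be an integer and let S, I, C be real numbers with I ≥ 2, I² ≤ S, C ≥ 0 and C ≥ (1/2)·log₂(I − 1). Then [ (1/2)·log₂(1 + S/(1+I)) + (1/2)·log₂(1 + S + I) + (K−1)/2 + log₂ K ] − [ (1/2)·log₂(1 + S/I) + (1/2)·log₂(I−1) + (1/2)·log₂(S/I) − (1/2)·log₂(K+1) − log₂(K−1) − (3/2)·log₂ K − (1/2)·log₂ 12 ] ≤ (K−1)/2 + (1/2)·log₂( 144·(K−1)²·K⁵·(K+1) ). -/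
open Real

theorem gauss_very_weak_gap_large_feedback (K : ℕ) (hK : 2 ≤ K) (S I C : ℝ)
    (hI : 2 ≤ I) (hSI : I ^ 2 ≤ S) (hC0 : 0 ≤ C)
    (hC1 : (1 / 2) * logb 2 (I - 1) ≤ C) :
    ((1 / 2) * logb 2 (1 + S / (1 + I)) + (1 / 2) * logb 2 (1 + S + I) +
        ((K : ℝ) - 1) / 2 + logb 2 (K : ℝ)) -
      ((1 / 2) * logb 2 (1 + S / I) + (1 / 2) * logb 2 (I - 1) +
        (1 / 2) * logb 2 (S / I) - (1 / 2) * logb 2 ((K : ℝ) + 1) -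
        logb 2 ((K : ℝ) - 1) - (3 / 2) * logb 2 (K : ℝ) - (1 / 2) * logb 2 12)
    ≤ ((K : ℝ) - 1) / 2 +
        (1 / 2) * logb 2 (144 * ((K : ℝ) - 1) ^ 2 * (K : ℝ) ^ 5 * ((K : ℝ) + 1)) := by
  have hb : (1:ℝ) < 2 := one_lt_two
  have hIpos : (0:ℝ) < I := by linarith
  have hS4 : (4:ℝ) ≤ S := by nlinarith
  have hIS : I ≤ S := by nlinarith
  have hSIpos : 0 < S / I := div_pos (by linarith) hIpos
  have hKr : (2:ℝ) ≤ (K : ℝ) := by exact_mod_cast hK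
  -- A ≤ C1
  have hA : logb 2 (1 + S / (1 + I)) ≤ logb 2 (1 + S / I) := by
    apply logb_le_logb_of_le hb (by positivity)
    have : S / (1 + I) ≤ S / I :=
      div_le_div_of_nonneg_left (by linarith) hIpos (by linarith)
    linarith
  -- B ≤ lb12 + D + E
  have hkey : (1 + S + I) * I ≤ 12 * ((I - 1) * S) := by nlinarith
  have hB1 : 1 + S + I ≤ 12 * ((I - 1) * (S / I)) := by
    have h2 : 1 + S + I ≤ 12 * ((I - 1) * S) / I := (le_div_iff₀ hIpos).mpr hkey
    have h3 : 12 * ((I - 1) * S) / I = 12 * ((I - 1) * (S / I)) := by ring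
    linarith [h3 ▸ h2]
  have hB : logb 2 (1 + S + I) ≤ logb 2 12 + logb 2 (I - 1) + logb 2 (S / I) := by
    have h4 : logb 2 (1 + S + I) ≤ logb 2 (12 * ((I - 1) * (S / I))) :=
      logb_le_logb_of_le hb (by linarith) hB1
    rw [logb_mul (by norm_num) (mul_pos (by linarith : (0:ℝ) < I - 1) hSIpos).ne', logb_mul (by intro h; nlinarith [h]) hSIpos.ne'] at h4
    linarith
  -- constants
  have hM : logb 2 (144 * ((K : ℝ) - 1) ^ 2 * (K : ℝ) ^ 5 * ((K : ℝ) + 1)) =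
      2 * logb 2 12 + 2 * logb 2 ((K : ℝ) - 1) + 5 * logb 2 (K : ℝ)
        + logb 2 ((K : ℝ) + 1) := by
    have hKm1 : (0:ℝ) < (K : ℝ) - 1 := by linarith
    have hKp : (0:ℝ) < (K : ℝ) := by linarith
    rw [logb_mul (by positivity) (by positivity), logb_mul (by positivity) (by positivity),
      logb_mul (by norm_num) (by positivity), logb_pow, logb_pow,
      show (144:ℝ) = 12 ^ 2 by norm_num, logb_pow]
    push_cast
    ring
  linarith
end

section
/- Let K ≥ 2 be an integer and let S, I, C be real numbers with S ≥ 1, S ≤ I², I³ ≤ S² and C ≥ 0. Set c := max(2^(−2C), I³/S²), μ6 := 1/(3I) − c/(4I). Then log₂( S·μ6 / ( I·μ6·(K−1) + 1 ) ) ≥ log₂(S/I) − log₂(4(K+2)). -/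
open Real

theorem gauss_weak_R6 (K : ℕ) (hK : 2 ≤ K) (S I C : ℝ)
    (hS : 1 ≤ S) (hSI : S ≤ I ^ 2) (hIS : I ^ 3 ≤ S ^ 2) (hC : 0 ≤ C)
    (c μ6 : ℝ)
    (hc : c = max ((2 : ℝ) ^ (-(2 * C))) (I ^ 3 / S ^ 2))
    (hμ6 : μ6 = 1 / (3 * I) - c / (4 * I)) :
    logb 2 (S * μ6 / (I * μ6 * ((K : ℝ) - 1) + 1))
      ≥ logb 2 (S / I) - logb 2 (4 * ((K : ℝ) + 2)) := by
  have hKr : (2 : ℝ) ≤ (K : ℝ) := by exact_mod_cast hK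
  have hI0 : I ≠ 0 := by
    intro h
    rw [h] at hSI
    norm_num at hSI
    linarith
  have hIa : 0 < |I| := abs_pos.mpr hI0
  have hS0 : (0 : ℝ) < S := by linarith
  have hc0 : 0 < c := by
    rw [hc]
    exact lt_of_lt_of_le (Real.rpow_pos_of_pos (by norm_num) _) (le_max_left _ _)
  have hc1 : c ≤ 1 := by
    rw [hc]
    apply max_le
    · exact Real.rpow_le_one_of_one_le_of_nonpos (by norm_num) (by linarith)
    · rw [div_le_one (by positivity)]; exact hIS
  obtain ⟨t, ht⟩ : ∃ t : ℝ, t = 1 / 3 - c / 4 := ⟨_, rfl⟩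
  have ht0 : (1 : ℝ) / 12 ≤ t := by rw [ht]; linarith
  have ht0' : (0 : ℝ) < t := lt_of_lt_of_le (by norm_num) ht0
  have hIμ : I * μ6 = t := by rw [hμ6, ht]; field_simp
  have hμ : μ6 = t / I := by rw [eq_div_iff hI0, mul_comm]; exact hIμ
  have hD : (0 : ℝ) < t * ((K : ℝ) - 1) + 1 := by nlinarith
  have hRHS : |S * μ6 / (I * μ6 * ((K : ℝ) - 1) + 1)|
      = S * t / |I| / (t * ((K : ℝ) - 1) + 1) := by
    rw [hIμ, abs_div, abs_of_pos hD, abs_mul, abs_of_pos hS0, hμ, abs_div,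
      abs_of_pos ht0']
    ring
  have key : S / |I| / (4 * ((K : ℝ) + 2)) ≤ S * t / |I| / (t * ((K : ℝ) - 1) + 1) := by
    rw [div_div, div_div, div_le_div_iff₀ (by positivity) (by positivity)]
    have h1 : t * ((K : ℝ) - 1) + 1 ≤ t * (4 * ((K : ℝ) + 2)) := by
      nlinarith [mul_nonneg (by linarith : (0:ℝ) ≤ t - 1/12) (by linarith : (0:ℝ) ≤ (K:ℝ) - 2)]
    nlinarith [mul_le_mul_of_nonneg_left h1 (le_of_lt (mul_pos hS0 hIa))]
  have hne1 : S / I ≠ 0 := div_ne_zero (ne_of_gt hS0) hI0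
  have hne2 : (4 : ℝ) * ((K : ℝ) + 2) ≠ 0 := by positivity
  have habs2 : |S / I / (4 * ((K : ℝ) + 2))| = S / |I| / (4 * ((K : ℝ) + 2)) := by
    rw [abs_div, abs_div, abs_of_pos hS0, abs_of_pos (by positivity : (0:ℝ) < 4 * ((K:ℝ)+2))]
  calc logb 2 (S / I) - logb 2 (4 * ((K : ℝ) + 2))
      = logb 2 (S / I / (4 * ((K : ℝ) + 2))) := (Real.logb_div hne1 hne2).symm
    _ = logb 2 (S / |I| / (4 * ((K : ℝ) + 2))) := by rw [← Real.logb_abs, habs2]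
    _ ≤ logb 2 (S * t / |I| / (t * ((K : ℝ) - 1) + 1)) := by
        exact Real.logb_le_logb_of_le (by norm_num) (by positivity) key
    _ = logb 2 (S * μ6 / (I * μ6 * ((K : ℝ) - 1) + 1)) := by
        rw [← hRHS, Real.logb_abs]
end

section
/- Let K ≥ 2 be an integer and let S, I, C be real numbers with S ≥ 1, S ≤ I², I³ ≤ S² and 0 ≤ C ≤ (1/2)·log₂(S²/I³). Let P := (K−1)²·(K+1/3)·(K+2/3)²·(K+2)²·(K+11/4). Then min{ log₂(1+S), log₂(1 + I + S/(1+I)) } + C − [ log₂(I²/S) + log₂(S/I) + min{ C, (1/2)·log₂(S²/I³) } − (1/2)·log₂(768·P) ] ≤ (1/2)·log₂(6912·P). -/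
open Real

set_option maxHeartbeats 1000000 in
theorem gauss_weak_gap_small_feedback (K : ℕ) (hK : 2 ≤ K) (S I C : ℝ)
    (hS : 1 ≤ S) (hSI : S ≤ I ^ 2) (hIS : I ^ 3 ≤ S ^ 2)
    (hC0 : 0 ≤ C) (hC1 : C ≤ (1 / 2) * logb 2 (S ^ 2 / I ^ 3))
    (P : ℝ)
    (hP : P = ((K : ℝ) - 1) ^ 2 * ((K : ℝ) + 1 / 3) * ((K : ℝ) + 2 / 3) ^ 2 *
        ((K : ℝ) + 2) ^ 2 * ((K : ℝ) + 11 / 4)) :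
    min (logb 2 (1 + S)) (logb 2 (1 + I + S / (1 + I))) + C -
      (logb 2 (I ^ 2 / S) + logb 2 (S / I) +
        min C ((1 / 2) * logb 2 (S ^ 2 / I ^ 3)) - (1 / 2) * logb 2 (768 * P))
    ≤ (1 / 2) * logb 2 (6912 * P) := by
  have hS0 : (0:ℝ) < S := by linarith
  have hK2 : (2:ℝ) ≤ (K : ℝ) := by exact_mod_cast hK
  have hP0 : 0 < P := by
    rw [hP]
    have h1 : (0:ℝ) < (K:ℝ) - 1 := by linarith
    have h2 : (0:ℝ) < (K:ℝ) + 1/3 := by linarith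
    have h3 : (0:ℝ) < (K:ℝ) + 2/3 := by linarith
    have h4 : (0:ℝ) < (K:ℝ) + 2 := by linarith
    have h5 : (0:ℝ) < (K:ℝ) + 11/4 := by linarith
    positivity
  rw [min_eq_left hC1]
  have hlog3 : (1/2) * logb 2 (6912 * P) = (1/2) * logb 2 (768 * P) + logb 2 3 := by
    have h9 : (6912 : ℝ) * P = 9 * (768 * P) := by ring
    rw [h9, Real.logb_mul (by norm_num) (by positivity),
      show (9:ℝ) = 3 ^ 2 by norm_num, Real.logb_pow]
    push_cast
    ring
  suffices h : min (logb 2 (1 + S)) (logb 2 (1 + I + S / (1 + I)))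
      ≤ logb 2 (I ^ 2 / S) + logb 2 (S / I) + logb 2 3 by linarith
  have hIabs : 1 ≤ I ∨ I ≤ -1 := by
    rcases le_or_gt 0 I with h | h
    · left; nlinarith
    · right; nlinarith
  rcases hIabs with hI | hI
  · -- I ≥ 1
    have hI0 : (0:ℝ) < I := by linarith
    have hA : logb 2 (I ^ 2 / S) + logb 2 (S / I) = logb 2 I := by
      rw [Real.logb_div (by positivity) (by positivity),
        Real.logb_div (by positivity) (by positivity), Real.logb_pow]
      push_cast; ring
    have hdiv : S / (1 + I) ≤ I := by
      rw [div_le_iff₀ (by linarith)]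
      nlinarith
    have harg : 1 + I + S / (1 + I) ≤ 3 * I := by linarith
    have hargpos : (0:ℝ) < 1 + I + S / (1 + I) := by
      have : 0 < S / (1 + I) := by positivity
      linarith
    calc min (logb 2 (1 + S)) (logb 2 (1 + I + S / (1 + I)))
        ≤ logb 2 (1 + I + S / (1 + I)) := min_le_right _ _
      _ ≤ logb 2 (3 * I) := Real.logb_le_logb_of_le one_lt_two hargpos harg
      _ = logb 2 3 + logb 2 I := Real.logb_mul (by norm_num) (by positivity)
      _ = logb 2 (I ^ 2 / S) + logb 2 (S / I) + logb 2 3 := by rw [hA]; ring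
  · -- I ≤ -1
    set t : ℝ := -I with ht
    have ht1 : 1 ≤ t := by simp only [ht]; linarith
    have ht0 : (0:ℝ) < t := by linarith
    have hSle : S ≤ t ^ 2 := by nlinarith
    have hA : logb 2 (I ^ 2 / S) + logb 2 (S / I) = logb 2 t := by
      have e1 : I ^ 2 / S = t ^ 2 / S := by rw [ht]; ring
      have e2 : S / I = -(S / t) := by
        rw [ht]; field_simp
      rw [e1, e2, show -(S/t) = -(S/t) from rfl]
      have : logb 2 (-(S / t)) = logb 2 (S / t) := by
        unfold Real.logb
        rw [Real.log_neg_eq_log]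
      rw [this, Real.logb_div (by positivity) (by positivity),
        Real.logb_div (by positivity) (by positivity), Real.logb_pow]
      push_cast; ring
    rw [hA]
    have h3t : logb 2 t + logb 2 3 = logb 2 (3 * t) := by
      rw [mul_comm, Real.logb_mul (ne_of_gt ht0) (by norm_num)]
    rw [h3t]
    rcases le_or_gt (1 + S) (3 * t) with hcase | hcase
    · calc min (logb 2 (1 + S)) (logb 2 (1 + I + S / (1 + I)))
          ≤ logb 2 (1 + S) := min_le_left _ _
        _ ≤ logb 2 (3 * t) := Real.logb_le_logb_of_le one_lt_two (by linarith) hcase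
    ·
      have htt : 1 < t := by
        by_contra hcon
        push_neg at hcon
        have he : t = 1 := le_antisymm hcon ht1
        rw [he] at hcase hSle
        nlinarith [hcase, hSle]
      have h1I : 1 + I < 0 := by simp only [ht] at htt; linarith
      have hx : 1 + I + S / (1 + I) = -((t - 1) + S / (t - 1)) := by
        have h1 : 1 + I = -(t - 1) := by rw [ht]; ring
        rw [h1]
        rw [div_neg]
        ring
      have hpos : (0:ℝ) < (t - 1) + S / (t - 1) := by
        have : 0 < S / (t - 1) := div_pos hS0 (by linarith)
        linarith
      have hbound : (t - 1) + S / (t - 1) ≤ 3 * t := by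
        have hd : S / (t - 1) ≤ 2 * t + 1 := by
          rw [div_le_iff₀ (by linarith)]
          nlinarith
        linarith
      have hlogx : logb 2 (1 + I + S / (1 + I)) = logb 2 ((t - 1) + S / (t - 1)) := by
        rw [hx]
        unfold Real.logb
        rw [Real.log_neg_eq_log]
      calc min (logb 2 (1 + S)) (logb 2 (1 + I + S / (1 + I)))
          ≤ logb 2 (1 + I + S / (1 + I)) := min_le_right _ _
        _ = logb 2 ((t - 1) + S / (t - 1)) := hlogx
        _ ≤ logb 2 (3 * t) := Real.logb_le_logb_of_le one_lt_two hpos hbound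
end

section
/- Let K ≥ 2 be an integer and let S, I, C be real numbers with S ≥ 1, I ≥ S² and C ≥ 0. Set c := min(2^(2C), I/S²), μ2 := (S/(2I))·c, μ1 := 1 − μ2. Then log₂( I·μ1 / ( S·(μ1+μ2) + I·μ2·(K−1) + 1 ) ) ≥ log₂ S − log₂(K+3). -/
open Real

theorem gauss_strong_R1 (K : ℕ) (hK : 2 ≤ K) (S I C : ℝ)
    (hS : 1 ≤ S) (hI : S ^ 2 ≤ I) (hC : 0 ≤ C)
    (c μ1 μ2 : ℝ)
    (hc : c = min ((2 : ℝ) ^ (2 * C)) (I / S ^ 2))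
    (hμ2 : μ2 = (S / (2 * I)) * c)
    (hμ1 : μ1 = 1 - μ2) :
    logb 2 (I * μ1 / (S * (μ1 + μ2) + I * μ2 * ((K : ℝ) - 1) + 1))
      ≥ logb 2 S - logb 2 ((K : ℝ) + 3) := by
  have hS0 : (0:ℝ) < S := by linarith
  have hI1 : (1:ℝ) ≤ I := by nlinarith
  have hI0 : (0:ℝ) < I := by linarith
  have hK3 : (0:ℝ) < (K:ℝ) + 3 := by positivity
  have hK2 : (2:ℝ) ≤ (K:ℝ) := by exact_mod_cast hK
  -- c bounds
  have hc1 : (1:ℝ) ≤ c := by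
    rw [hc]
    apply le_min
    · calc (1:ℝ) = (2:ℝ) ^ (0:ℝ) := (rpow_zero 2).symm
        _ ≤ (2:ℝ) ^ (2*C) := rpow_le_rpow_of_exponent_le one_le_two (by linarith)
    · rw [le_div_iff₀ (by positivity)]; linarith
  have hcle : c ≤ I / S ^ 2 := hc ▸ min_le_right _ _
  have hS2c : S ^ 2 * c ≤ I := by
    rw [le_div_iff₀ (by positivity)] at hcle; linarith
  -- μ2 bounds
  have hμ2pos : 0 < μ2 := by rw [hμ2]; positivity
  have hμ2le : μ2 ≤ 1 / 2 := by
    rw [hμ2]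
    rw [div_mul_eq_mul_div, div_le_div_iff₀ (by positivity) (by norm_num)]
    nlinarith
  have hμ1half : (1:ℝ)/2 ≤ μ1 := by rw [hμ1]; linarith
  have hIμ2 : I * μ2 = S * c / 2 := by
    rw [hμ2]; field_simp
  -- denominator
  have hSleI : S ≤ I := by nlinarith
  have hD : 0 < S * (μ1 + μ2) + I * μ2 * ((K : ℝ) - 1) + 1 := by
    have : (0:ℝ) < I * μ2 := by positivity
    nlinarith
  have hkey : S / ((K:ℝ) + 3) ≤ I * μ1 / (S * (μ1 + μ2) + I * μ2 * ((K : ℝ) - 1) + 1) := by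
    rw [div_le_div_iff₀ hK3 hD]
    have h1 : S * (I * μ2) ≤ I / 2 := by
      rw [hIμ2]; nlinarith
    have h2 : I / 2 ≤ I * μ1 := by nlinarith
    nlinarith [mul_pos hI0 hμ2pos]
  have hx0 : 0 < S / ((K:ℝ) + 3) := by positivity
  calc logb 2 S - logb 2 ((K : ℝ) + 3)
      = logb 2 (S / ((K:ℝ) + 3)) := (logb_div (by linarith) (by linarith)).symm
    _ ≤ logb 2 (I * μ1 / (S * (μ1 + μ2) + I * μ2 * ((K : ℝ) - 1) + 1)) :=
        logb_le_logb_of_le one_lt_two hx0 hkey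
end

section
/- Let K ≥ 2 be an integer and let S, I, C be real numbers with S ≥ 1, I ≥ S² and C ≥ (1/2)·log₂(I/S²). Then [ (1/2)·log₂(1 + S/(1+I)) + (1/2)·log₂(1 + S + I) + (K−1)/2 + log₂ K ] − [ log₂ S + (1/2)·log₂(I/S²) − (1/2)·log₂(20(K+3)) ] ≤ (K−1)/2 + (1/2)·log₂(180·K²·(K+3)). -/
open Real

theorem gauss_strong_gap_large_feedback (K : ℕ) (hK : 2 ≤ K) (S I C : ℝ)
    (hS : 1 ≤ S) (hI : S ^ 2 ≤ I)
    (hC : (1 / 2) * logb 2 (I / S ^ 2) ≤ C) :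
    ((1 / 2) * logb 2 (1 + S / (1 + I)) + (1 / 2) * logb 2 (1 + S + I) +
        ((K : ℝ) - 1) / 2 + logb 2 (K : ℝ)) -
      (logb 2 S + (1 / 2) * logb 2 (I / S ^ 2) -
        (1 / 2) * logb 2 (20 * ((K : ℝ) + 3)))
    ≤ ((K : ℝ) - 1) / 2 + (1 / 2) * logb 2 (180 * (K : ℝ) ^ 2 * ((K : ℝ) + 3)) := by
  have hS0 : (0:ℝ) < S := lt_of_lt_of_le one_pos hS
  have hSS : S ≤ S ^ 2 := by nlinarith
  have hI1 : (1:ℝ) ≤ I := le_trans (by nlinarith) hI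
  have hI0 : (0:ℝ) < I := lt_of_lt_of_le one_pos hI1
  have hK0 : (0:ℝ) < (K:ℝ) := by positivity
  have hfpos : (0:ℝ) < 1 + S / (1 + I) := by positivity
  have hBpos : (0:ℝ) < 1 + S + I := by linarith
  have hfrac : S / (1 + I) ≤ 1 := by
    rw [div_le_one (by linarith)]
    nlinarith
  have hprod : (1 + S / (1 + I)) * (1 + S + I) ≤ 9 * I := by
    have hA : 1 + S / (1 + I) ≤ 2 := by linarith
    have hB : 1 + S + I ≤ 3 * I := by nlinarith
    nlinarith
  have hkey : logb 2 (1 + S / (1 + I)) + logb 2 (1 + S + I) ≤ logb 2 9 + logb 2 I := by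
    have h := (Real.logb_le_logb (by norm_num : (1:ℝ) < 2)
      (mul_pos hfpos hBpos) (by positivity : (0:ℝ) < 9 * I)).mpr hprod
    rwa [Real.logb_mul hfpos.ne' hBpos.ne',
      Real.logb_mul (by norm_num) hI0.ne'] at h
  have hdiv : logb 2 (I / S ^ 2) = logb 2 I - 2 * logb 2 S := by
    rw [Real.logb_div hI0.ne' (by positivity), Real.logb_pow]
    push_cast; ring
  have hsplit : logb 2 (180 * (K:ℝ) ^ 2 * ((K:ℝ) + 3))
      = logb 2 9 + 2 * logb 2 (K:ℝ) + logb 2 (20 * ((K:ℝ) + 3)) := by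
    have : (180 : ℝ) * (K:ℝ) ^ 2 * ((K:ℝ) + 3) = 9 * (K:ℝ) ^ 2 * (20 * ((K:ℝ) + 3)) := by
      ring
    rw [this, Real.logb_mul (by positivity) (by positivity),
      Real.logb_mul (by norm_num) (by positivity), Real.logb_pow]
    push_cast; ring
  rw [hdiv, hsplit]
  linarith
end

section
/- Fix an integer K ≥ 2 and real numbers α, β with 0 ≤ α ≤ 1/2 and β ≥ 0. For S > 1 define F(S) := min{ (1/2)·log₂(1 + S/(1+S^α)) + (1/2)·log₂(1 + S + S^α) + (K−1)/2 + log₂ K , min{ log₂(1+S), log₂(1 + S^α + S/(1+S^α)) } + β·log₂ S }. Then F(S)/log₂ S tends to min{ 1 − α + β, 1 − α/2 } as S tends to infinity. -/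
open Real Filter

private lemma logb_ratio {c c1 c2 : ℝ} (h1 : 0 < c1) (h2 : 0 < c2) {f : ℝ → ℝ}
    (hlow : ∀ᶠ S in atTop, c1 * S ^ c ≤ f S)
    (hupp : ∀ᶠ S in atTop, f S ≤ c2 * S ^ c) :
    Tendsto (fun S => logb 2 (f S) / logb 2 S) atTop (nhds c) := by
  have hlogS : Tendsto (fun S : ℝ => logb 2 S) atTop atTop :=
    Real.tendsto_logb_atTop one_lt_two
  have hlo : Tendsto (fun S : ℝ => logb 2 c1 / logb 2 S + c) atTop (nhds c) := by
    simpa using (tendsto_const_nhds.div_atTop hlogS).add (tendsto_const_nhds (x := c))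
  have hhi : Tendsto (fun S : ℝ => logb 2 c2 / logb 2 S + c) atTop (nhds c) := by
    simpa using (tendsto_const_nhds.div_atTop hlogS).add (tendsto_const_nhds (x := c))
  refine tendsto_of_tendsto_of_tendsto_of_le_of_le' hlo hhi ?_ ?_
  · filter_upwards [hlow, hupp, eventually_ge_atTop (2 : ℝ)] with S hl hu hS
    have hSpos : (0 : ℝ) < S := by linarith
    have hLpos : 0 < logb 2 S := Real.logb_pos one_lt_two (by linarith)
    have hcS : 0 < c1 * S ^ c := mul_pos h1 (Real.rpow_pos_of_pos hSpos c)
    have hfpos : 0 < f S := lt_of_lt_of_le hcS hl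
    have h3 : logb 2 (c1 * S ^ c) ≤ logb 2 (f S) :=
      (Real.logb_le_logb one_lt_two hcS hfpos).mpr hl
    have h4 : logb 2 (c1 * S ^ c) = logb 2 c1 + c * logb 2 S := by
      rw [Real.logb_mul (ne_of_gt h1) (ne_of_gt (Real.rpow_pos_of_pos hSpos c))]
      simp [Real.logb, Real.log_rpow hSpos]
      ring
    calc logb 2 c1 / logb 2 S + c = logb 2 (c1 * S ^ c) / logb 2 S := by
          rw [h4, add_div, mul_div_cancel_right₀ _ (ne_of_gt hLpos)]
      _ ≤ logb 2 (f S) / logb 2 S := by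
          exact div_le_div_of_nonneg_right h3 hLpos.le
  · filter_upwards [hlow, hupp, eventually_ge_atTop (2 : ℝ)] with S hl hu hS
    have hSpos : (0 : ℝ) < S := by linarith
    have hLpos : 0 < logb 2 S := Real.logb_pos one_lt_two (by linarith)
    have hcS : 0 < c1 * S ^ c := mul_pos h1 (Real.rpow_pos_of_pos hSpos c)
    have hfpos : 0 < f S := lt_of_lt_of_le hcS hl
    have hcS2 : 0 < c2 * S ^ c := mul_pos h2 (Real.rpow_pos_of_pos hSpos c)
    have h3 : logb 2 (f S) ≤ logb 2 (c2 * S ^ c) :=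
      (Real.logb_le_logb one_lt_two hfpos hcS2).mpr hu
    have h4 : logb 2 (c2 * S ^ c) = logb 2 c2 + c * logb 2 S := by
      rw [Real.logb_mul (ne_of_gt h2) (ne_of_gt (Real.rpow_pos_of_pos hSpos c))]
      simp [Real.logb, Real.log_rpow hSpos]
      ring
    calc logb 2 (f S) / logb 2 S ≤ logb 2 (c2 * S ^ c) / logb 2 S :=
          div_le_div_of_nonneg_right h3 hLpos.le
      _ = logb 2 c2 / logb 2 S + c := by
          rw [h4, add_div, mul_div_cancel_right₀ _ (ne_of_gt hLpos)]

theorem gdof_very_weak (K : ℕ) (hK : 2 ≤ K) (α β : ℝ)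
    (hα0 : 0 ≤ α) (hα : α ≤ 1 / 2) (hβ : 0 ≤ β) :
    Tendsto (fun S : ℝ =>
        (min
          ((1 / 2) * logb 2 (1 + S / (1 + S ^ α)) +
            (1 / 2) * logb 2 (1 + S + S ^ α) + ((K : ℝ) - 1) / 2 + logb 2 (K : ℝ))
          (min (logb 2 (1 + S)) (logb 2 (1 + S ^ α + S / (1 + S ^ α))) +
            β * logb 2 S)) / logb 2 S)
      atTop (nhds (min (1 - α + β) (1 - α / 2))) := by
  have hlogS : Tendsto (fun S : ℝ => logb 2 S) atTop atTop :=
    Real.tendsto_logb_atTop one_lt_two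
  -- basic eventual facts
  have hbounds : ∀ᶠ S : ℝ in atTop,
      ((1:ℝ)/2) * S ^ (1 - α) ≤ 1 + S / (1 + S ^ α) ∧
      1 + S / (1 + S ^ α) ≤ 2 * S ^ (1 - α) ∧
      1 * S ^ (1:ℝ) ≤ 1 + S + S ^ α ∧
      1 + S + S ^ α ≤ 3 * S ^ (1:ℝ) ∧
      1 * S ^ (1:ℝ) ≤ 1 + S ∧
      1 + S ≤ 2 * S ^ (1:ℝ) ∧
      ((1:ℝ)/2) * S ^ (1 - α) ≤ 1 + S ^ α + S / (1 + S ^ α) ∧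
      1 + S ^ α + S / (1 + S ^ α) ≤ 3 * S ^ (1 - α) := by
    filter_upwards [eventually_ge_atTop (1 : ℝ)] with S hS1
    have hSpos : (0 : ℝ) < S := by linarith
    have hαpos : 0 < S ^ α := Real.rpow_pos_of_pos hSpos α
    have hα1 : 1 ≤ S ^ α := by
      calc (1:ℝ) = S ^ (0:ℝ) := (Real.rpow_zero S).symm
        _ ≤ S ^ α := Real.rpow_le_rpow_of_exponent_le hS1 hα0
    have h1α1 : 1 ≤ S ^ (1 - α) := by
      calc (1:ℝ) = S ^ (0:ℝ) := (Real.rpow_zero S).symm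
        _ ≤ S ^ (1 - α) := Real.rpow_le_rpow_of_exponent_le hS1 (by linarith)
    have hαle : S ^ α ≤ S ^ (1 - α) := Real.rpow_le_rpow_of_exponent_le hS1 (by linarith)
    have hS1' : S ^ (1:ℝ) = S := Real.rpow_one S
    have hdivrw : S / S ^ α = S ^ (1 - α) := by
      rw [Real.rpow_sub hSpos, Real.rpow_one]
    have hdivlow : S ^ (1 - α) / 2 ≤ S / (1 + S ^ α) := by
      rw [← hdivrw]
      rw [div_div]
      apply div_le_div_of_nonneg_left (le_of_lt hSpos) (by linarith)
      linarith
    have hdivhigh : S / (1 + S ^ α) ≤ S ^ (1 - α) := by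
      rw [← hdivrw]
      apply div_le_div_of_nonneg_left (le_of_lt hSpos) hαpos
      linarith
    have hdivnonneg : 0 ≤ S / (1 + S ^ α) := by positivity
    have hαS : S ^ α ≤ S := by
      calc S ^ α ≤ S ^ (1:ℝ) := Real.rpow_le_rpow_of_exponent_le hS1 (by linarith)
        _ = S := hS1'
    refine ⟨by linarith, by linarith, by rw [hS1']; linarith, by rw [hS1']; linarith,
      by rw [hS1']; linarith, by rw [hS1']; linarith, by linarith, by linarith⟩
  have h1 : Tendsto (fun S : ℝ => logb 2 (1 + S / (1 + S ^ α)) / logb 2 S) atTop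
      (nhds (1 - α)) :=
    logb_ratio (by norm_num) (by norm_num : (0:ℝ) < 2)
      (hbounds.mono fun S h => h.1) (hbounds.mono fun S h => h.2.1)
  have h2 : Tendsto (fun S : ℝ => logb 2 (1 + S + S ^ α) / logb 2 S) atTop (nhds 1) :=
    logb_ratio (by norm_num : (0:ℝ) < 1) (by norm_num : (0:ℝ) < 3)
      (hbounds.mono fun S h => h.2.2.1) (hbounds.mono fun S h => h.2.2.2.1)
  have h4 : Tendsto (fun S : ℝ => logb 2 (1 + S) / logb 2 S) atTop (nhds 1) :=
    logb_ratio (by norm_num : (0:ℝ) < 1) (by norm_num : (0:ℝ) < 2)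
      (hbounds.mono fun S h => h.2.2.2.2.1) (hbounds.mono fun S h => h.2.2.2.2.2.1)
  have h5 : Tendsto (fun S : ℝ => logb 2 (1 + S ^ α + S / (1 + S ^ α)) / logb 2 S) atTop
      (nhds (1 - α)) :=
    logb_ratio (by norm_num) (by norm_num : (0:ℝ) < 3)
      (hbounds.mono fun S h => h.2.2.2.2.2.2.1) (hbounds.mono fun S h => h.2.2.2.2.2.2.2)
  have hconst : Tendsto (fun S : ℝ => (((K : ℝ) - 1) / 2 + logb 2 (K : ℝ)) / logb 2 S)
      atTop (nhds 0) := tendsto_const_nhds.div_atTop hlogS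
  -- limit of the first branch
  have hA : Tendsto (fun S : ℝ =>
      ((1 / 2) * logb 2 (1 + S / (1 + S ^ α)) + (1 / 2) * logb 2 (1 + S + S ^ α) +
        ((K : ℝ) - 1) / 2 + logb 2 (K : ℝ)) / logb 2 S) atTop (nhds (1 - α / 2)) := by
    have : Tendsto (fun S : ℝ =>
        (1 / 2) * (logb 2 (1 + S / (1 + S ^ α)) / logb 2 S) +
        (1 / 2) * (logb 2 (1 + S + S ^ α) / logb 2 S) +
        (((K : ℝ) - 1) / 2 + logb 2 (K : ℝ)) / logb 2 S) atTop
        (nhds ((1 / 2) * (1 - α) + (1 / 2) * 1 + 0)) :=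
      ((h1.const_mul _).add (h2.const_mul _)).add hconst
    have heq : (1 / 2) * (1 - α) + (1 / 2) * (1:ℝ) + 0 = 1 - α / 2 := by ring
    rw [heq] at this
    refine this.congr (fun S => ?_)
    ring
  -- limit of the second branch
  have hB : Tendsto (fun S : ℝ =>
      (min (logb 2 (1 + S)) (logb 2 (1 + S ^ α + S / (1 + S ^ α))) + β * logb 2 S) /
        logb 2 S) atTop (nhds (1 - α + β)) := by
    have hmin : Tendsto (fun S : ℝ =>
        min (logb 2 (1 + S) / logb 2 S) (logb 2 (1 + S ^ α + S / (1 + S ^ α)) / logb 2 S) + β)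
        atTop (nhds (min 1 (1 - α) + β)) := (h4.min h5).add tendsto_const_nhds
    have heq : min (1:ℝ) (1 - α) + β = 1 - α + β := by
      rw [min_eq_right (by linarith)]
    rw [heq] at hmin
    refine hmin.congr' ?_
    filter_upwards [eventually_ge_atTop (2 : ℝ)] with S hS
    have hLpos : 0 < logb 2 S := Real.logb_pos one_lt_two (by linarith)
    rw [min_div_div_right (le_of_lt hLpos), add_div,
      mul_div_assoc, div_self (ne_of_gt hLpos), mul_one]
  -- combine
  have hmin : Tendsto (fun S : ℝ =>
      min (((1 / 2) * logb 2 (1 + S / (1 + S ^ α)) + (1 / 2) * logb 2 (1 + S + S ^ α) +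
        ((K : ℝ) - 1) / 2 + logb 2 (K : ℝ)) / logb 2 S)
      ((min (logb 2 (1 + S)) (logb 2 (1 + S ^ α + S / (1 + S ^ α))) + β * logb 2 S) /
        logb 2 S)) atTop (nhds (min (1 - α / 2) (1 - α + β))) := hA.min hB
  rw [min_comm] at hmin
  refine hmin.congr' ?_
  filter_upwards [eventually_ge_atTop (2 : ℝ)] with S hS
  have hLpos : 0 < logb 2 S := Real.logb_pos one_lt_two (by linarith)
  rw [min_div_div_right (le_of_lt hLpos)]
end

section
/- Fix an integer K ≥ 2 and real numbers α, β with α ≥ 2 and β ≥ 0. For S > 1 define F(S) := min{ (1/2)·log₂(1 + S/(1+S^α)) + (1/2)·log₂(1 + S + S^α) + (K−1)/2 + log₂ K , min{ log₂(1+S), log₂(1 + S^α + S/(1+S^α)) } + β·log₂ S }. Then F(S)/log₂ S tends to min{ 1 + β, α/2 } as S tends to infinity. -/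
open Real Filter Topology

/-!
With `L = log₂ S`, each branch of the minimum is an affine function of `L` up to a convergent
error: since `α > 1`, the first branch is `(α/2)·L + (K-1)/2 + log₂ K + o(1)` (the terms
`S / (1 + S^α)` and `(1 + S) / S^α` vanish), and for `S ≥ 1` the inner minimum is `log₂ (1 + S)`,
so the second branch is `(1 + β)·L + o(1)`. Dividing by `L → ∞` gives the two slopes, and
division by the positive `L` commutes with `min`.
-/

lemma Filter.Tendsto.div_of_tendsto_sub_mul {ι : Type*} {l : Filter ι} {g L : ι → ℝ} {a c : ℝ}
    (hL : Tendsto L l atTop) (h : Tendsto (fun x => g x - a * L x) l (𝓝 c)) :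
    Tendsto (fun x => g x / L x) l (𝓝 a) := by
  have hlim := (h.mul hL.inv_tendsto_atTop).const_add a
  rw [mul_zero, add_zero] at hlim
  refine hlim.congr' ?_
  filter_upwards [hL.eventually_ne_atTop 0] with x hx
  simp only [Pi.inv_apply]
  field_simp
  ring

lemma tendsto_min_div_of_tendsto_sub_mul {ι : Type*} {l : Filter ι} {A B L : ι → ℝ}
    {a b c d : ℝ} (hL : Tendsto L l atTop) (hA : Tendsto (fun x => A x - a * L x) l (𝓝 c))
    (hB : Tendsto (fun x => B x - b * L x) l (𝓝 d)) :
    Tendsto (fun x => min (A x) (B x) / L x) l (𝓝 (min a b)) := by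
  refine ((hL.div_of_tendsto_sub_mul hA).min (hL.div_of_tendsto_sub_mul hB)).congr' ?_
  filter_upwards [hL.eventually_gt_atTop 0] with x hx
  exact min_div_div_right hx.le _ _

lemma tendsto_logb_one_add {ι : Type*} {l : Filter ι} {u : ι → ℝ} (b : ℝ)
    (hu : Tendsto u l (𝓝 0)) : Tendsto (fun x => logb b (1 + u x)) l (𝓝 0) := by
  have hsum : Tendsto (fun x => 1 + u x) l (𝓝 1) := by simpa using hu.const_add 1
  simpa [Function.comp_def] using (continuousAt_logb (b := b) one_ne_zero).tendsto.comp hsum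

section

variable {p : ℝ}

lemma tendsto_one_add_div_rpow_atTop (hp : 1 < p) :
    Tendsto (fun S : ℝ => (1 + S) / S ^ p) atTop (𝓝 0) := by
  have hlim := (tendsto_rpow_neg_atTop (by linarith : 0 < p)).add
    (tendsto_rpow_neg_atTop (by linarith : 0 < p - 1))
  rw [add_zero] at hlim
  refine hlim.congr' ?_
  filter_upwards [eventually_gt_atTop 0] with S hS
  rw [rpow_neg hS.le, neg_sub, rpow_sub hS, rpow_one, add_div, inv_eq_one_div]

lemma tendsto_div_one_add_rpow_atTop (hp : 1 < p) :
    Tendsto (fun S : ℝ => S / (1 + S ^ p)) atTop (𝓝 0) := by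
  refine tendsto_of_tendsto_of_tendsto_of_le_of_le' tendsto_const_nhds
    (tendsto_one_add_div_rpow_atTop hp) ?_ ?_
  · filter_upwards [eventually_ge_atTop 0] with S hS
    positivity
  · filter_upwards [eventually_gt_atTop 0] with S hS
    have hSp := rpow_pos_of_pos hS p
    gcongr <;> linarith

lemma tendsto_logb_one_add_add_rpow_sub_mul_logb (b : ℝ) (hp : 1 < p) :
    Tendsto (fun S : ℝ => logb b (1 + S + S ^ p) - p * logb b S) atTop (𝓝 0) := by
  refine (tendsto_logb_one_add b (tendsto_one_add_div_rpow_atTop hp)).congr' ?_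
  filter_upwards [eventually_gt_atTop 0] with S hS
  have hSp := rpow_pos_of_pos hS p
  have hfactor : 1 + S + S ^ p = S ^ p * (1 + (1 + S) / S ^ p) := by
    field_simp
    ring
  rw [hfactor, logb_mul hSp.ne' (by positivity), logb_rpow_eq_mul_logb_of_pos hS]
  ring

lemma min_logb_one_add_eq {b S : ℝ} (hb : 1 < b) (hp : 1 ≤ p) (hS : 1 ≤ S) :
    min (logb b (1 + S)) (logb b (1 + S ^ p + S / (1 + S ^ p))) = logb b (1 + S) := by
  have hSp : S ≤ S ^ p := by
    simpa using rpow_le_rpow_of_exponent_le hS hp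
  have hfrac : 0 ≤ S / (1 + S ^ p) := by positivity
  exact min_eq_left (logb_le_logb_of_le hb (by linarith) (by linarith))

end

theorem gdof_very_strong_general (K : ℕ) (α β : ℝ)
    (hα : 2 ≤ α) :
    Tendsto (fun S : ℝ =>
        (min
          ((1 / 2) * logb 2 (1 + S / (1 + S ^ α)) +
            (1 / 2) * logb 2 (1 + S + S ^ α) + ((K : ℝ) - 1) / 2 + logb 2 (K : ℝ))
          (min (logb 2 (1 + S)) (logb 2 (1 + S ^ α + S / (1 + S ^ α))) +
            β * logb 2 S)) / logb 2 S)
      atTop (nhds (min (1 + β) (α / 2))) := by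
  have hα1 : 1 < α := by linarith
  rw [min_comm]
  refine tendsto_min_div_of_tendsto_sub_mul (c := ((K : ℝ) - 1) / 2 + logb 2 K) (d := 0)
    (tendsto_logb_atTop one_lt_two) ?_ ?_
  · have hlim := (((tendsto_logb_one_add 2 (tendsto_div_one_add_rpow_atTop hα1)).const_mul
      (1 / 2)).add ((tendsto_logb_one_add_add_rpow_sub_mul_logb 2 hα1).const_mul (1 / 2))).add_const
      (((K : ℝ) - 1) / 2 + logb 2 K)
    simp only [mul_zero, zero_add] at hlim
    exact hlim.congr fun S => by ring
  · refine (tendsto_logb_one_add 2 tendsto_inv_atTop_zero).congr' ?_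
    filter_upwards [eventually_ge_atTop 1] with S hS
    have hS0 : S ≠ 0 := by positivity
    have hquot : (1 + S) / S = 1 + S⁻¹ := by field_simp; ring
    rw [min_logb_one_add_eq one_lt_two hα1.le hS, ← hquot, logb_div (by positivity) hS0]
    ring

theorem gdof_very_strong (K : ℕ) (hK : 2 ≤ K) (α β : ℝ)
    (hα : 2 ≤ α) (hβ : 0 ≤ β) :
    Tendsto (fun S : ℝ =>
        (min
          ((1 / 2) * logb 2 (1 + S / (1 + S ^ α)) +
            (1 / 2) * logb 2 (1 + S + S ^ α) + ((K : ℝ) - 1) / 2 + logb 2 (K : ℝ))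
          (min (logb 2 (1 + S)) (logb 2 (1 + S ^ α + S / (1 + S ^ α))) +
            β * logb 2 S)) / logb 2 S)
      atTop (nhds (min (1 + β) (α / 2))) :=
  gdof_very_strong_general K α β hα
end
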